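/- Let A be a unital C*-algebra, and let P : A → A be a faithful projection (P² = P) which is a Schwarz map. Then the range of P is a C*-subalgebra of A. -/

import Mathlib

/-!
A Schwarz map is positive, hence bounded and `star`-preserving (polarization writes every element
as a combination of elements `star z * z`). If `P y = y`, the Schwarz inequality gives
`star y * y ≤ P (star y * y)`; the difference is positive and killed by `P`, so by faithfulness
`star y * y` is again fixed. Polarization upgrades closure under `y ↦ star y * y` to closure
under `(y, z) ↦ star y * z`, and the range of a continuous projection is closed.
-/

open Complex

section Polarization

variable {A : Type*} [NonUnitalRing A] [StarRing A] [Module ℂ A] [StarModule ℂ A]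
  [IsScalarTower ℂ A A] [SMulCommClass ℂ A A]

theorem star_mul_polarization (x y : A) :
    (4 : ℂ) • (star y * x) =
      star (x + (1 : ℂ) • y) * (x + (1 : ℂ) • y) + I • (star (x + I • y) * (x + I • y))
        - star (x + (-1 : ℂ) • y) * (x + (-1 : ℂ) • y)
        - I • (star (x + (-I) • y) * (x + (-I) • y)) := by
  simp only [star_add, star_smul, mul_add, add_mul, smul_mul_assoc, mul_smul_comm, smul_smul,
    smul_add, one_smul, star_def, conj_I]
  match_scalars <;> norm_num [Complex.ext_iff]

theorem Submodule.star_mul_mem_of_forall_star_mul_self_mem {S : Submodule ℂ A} {x y : A}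
    (h : ∀ c : ℂ, star (x + c • y) * (x + c • y) ∈ S) : star y * x ∈ S := by
  rw [← S.smul_mem_iff (by norm_num : (4 : ℂ) ≠ 0), star_mul_polarization]
  exact S.sub_mem (S.sub_mem (S.add_mem (h 1) (S.smul_mem _ (h I))) (h (-1)))
    (S.smul_mem _ (h (-I)))

end Polarization

theorem span_range_star_mul_self_eq_top {A : Type*} [Ring A] [StarRing A] [Module ℂ A]
    [StarModule ℂ A] [IsScalarTower ℂ A A] [SMulCommClass ℂ A A] :
    Submodule.span ℂ (Set.range fun z : A ↦ star z * z) = ⊤ := by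
  refine Submodule.eq_top_iff'.mpr fun x ↦ ?_
  simpa using Submodule.star_mul_mem_of_forall_star_mul_self_mem (x := x) (y := 1)
    fun _ ↦ Submodule.subset_span (Set.mem_range_self _)

theorem LinearMap.map_star_of_isSelfAdjoint_map_star_mul_self {A B : Type*} [Ring A] [StarRing A]
    [Module ℂ A] [StarModule ℂ A] [IsScalarTower ℂ A A] [SMulCommClass ℂ A A]
    [AddCommGroup B] [StarAddMonoid B] [Module ℂ B] [StarModule ℂ B]
    (P : A →ₗ[ℂ] B) (hP : ∀ z, IsSelfAdjoint (P (star z * z))) (x : A) :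
    P (star x) = star (P x) := by
  have h : P ∘ₛₗ (starLinearEquiv ℂ).toLinearMap = (starLinearEquiv ℂ).toLinearMap ∘ₛₗ P :=
    LinearMap.ext_on_range span_range_star_mul_self_eq_top fun z ↦ by
      simp [(hP z).star_eq]
  exact congr($h x)

theorem map_nonneg_of_schwarz {A B F : Type*} [NonUnitalSemiring A] [PartialOrder A]
    [StarRing A] [StarOrderedRing A] [NonUnitalSemiring B] [PartialOrder B] [StarRing B]
    [StarOrderedRing B] [FunLike F A B] [AddMonoidHomClass F A B] (P : F)
    (hP : ∀ x, star (P x) * P x ≤ P (star x * x)) {a : A} (ha : 0 ≤ a) : 0 ≤ P a := by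
  rw [StarOrderedRing.nonneg_iff] at ha
  induction ha using AddSubmonoid.closure_induction with
  | mem _ h =>
    obtain ⟨s, rfl⟩ := h
    exact (star_mul_self_nonneg _).trans (hP s)
  | zero => simp
  | add _ _ _ _ hz hw => rw [map_add]; exact add_nonneg hz hw

theorem map_star_mul_self_of_schwarz {A F : Type*} [NonUnitalRing A] [PartialOrder A]
    [StarRing A] [StarOrderedRing A] [FunLike F A A] [AddMonoidHomClass F A A] (P : F)
    (hproj : ∀ x, P (P x) = P x) (hfaithful : ∀ x : A, 0 ≤ x → P x = 0 → x = 0)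
    (hschwarz : ∀ x, star (P x) * P x ≤ P (star x * x)) {y : A} (hy : P y = y) :
    P (star y * y) = star y * y := by
  have hle : star y * y ≤ P (star y * y) := by simpa only [hy] using hschwarz y
  refine sub_eq_zero.mp (hfaithful _ (sub_nonneg.mpr hle) ?_)
  rw [map_sub, hproj, sub_self]

def NonUnitalStarSubalgebra.ofSubmodule {A : Type*} [NonUnitalRing A] [StarRing A] [Module ℂ A]
    [StarModule ℂ A] [IsScalarTower ℂ A A] [SMulCommClass ℂ A A] (S : Submodule ℂ A)
    (star_mem : ∀ x ∈ S, star x ∈ S) (star_mul_self_mem : ∀ x ∈ S, star x * x ∈ S) :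
    NonUnitalStarSubalgebra ℂ A where
  toSubmodule := S
  mul_mem' {x y} hx hy := by
    simpa using Submodule.star_mul_mem_of_forall_star_mul_self_mem fun c ↦
      star_mul_self_mem _ (S.add_mem hy (S.smul_mem c (star_mem x hx)))
  star_mem' {x} := star_mem x

theorem range_of_faithful_schwarz_projection_is_cstar_subalgebra_general
    {A : Type*} [NormedRing A] [StarRing A] [CStarRing A] [NormedAlgebra ℂ A]
    [StarModule ℂ A] [PartialOrder A] [StarOrderedRing A]
    [CompleteSpace A]
    (P : A →ₗ[ℂ] A)
    (hproj : ∀ x, P (P x) = P x)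
    (hfaithful : ∀ x : A, 0 ≤ x → P x = 0 → x = 0)
    (hschwarz : ∀ x : A, star (P x) * P x ≤ P (star x * x)) :
    ∃ S : NonUnitalStarSubalgebra ℂ A,
      (S : Set A) = Set.range ⇑P ∧ IsClosed (S : Set A) := by
  let _ : CStarAlgebra A := { }
  have hpos (a : A) : 0 ≤ a → 0 ≤ P a := map_nonneg_of_schwarz P hschwarz
  have hstar := P.map_star_of_isSelfAdjoint_map_star_mul_self fun z ↦
    .of_nonneg (hpos _ (star_mul_self_nonneg z))
  have hfix (a : A) : P (star (P a) * P a) = star (P a) * P a :=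
    map_star_mul_self_of_schwarz P hproj hfaithful hschwarz (hproj a)
  let S := NonUnitalStarSubalgebra.ofSubmodule (LinearMap.range P)
    (by rintro _ ⟨a, rfl⟩; exact ⟨star a, hstar a⟩) (by rintro _ ⟨a, rfl⟩; exact ⟨_, hfix a⟩)
  let Pc : A →L[ℂ] A := ⟨P, map_continuous (PositiveLinearMap.mk₀ P hpos)⟩
  exact ⟨S, LinearMap.coe_range P,
    ContinuousLinearMap.IsIdempotentElem.isClosed_range (p := Pc) (ContinuousLinearMap.ext hproj)⟩

/-- Let `A` be a unital C*-algebra and `P : A → A` a faithful linear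
projection which is a Schwarz map.  Then the range of `P` is a C*-subalgebra of `A`,
i.e. a closed (non-unital) star subalgebra. -/
theorem range_of_faithful_schwarz_projection_is_cstar_subalgebra
    {A : Type*} [NormedRing A] [StarRing A] [CStarRing A] [NormedAlgebra ℂ A]
    [StarModule ℂ A] [PartialOrder A] [StarOrderedRing A] [NormOneClass A]
    [CompleteSpace A]
    (P : A →ₗ[ℂ] A)
    (hproj : ∀ x, P (P x) = P x)
    (hfaithful : ∀ x : A, 0 ≤ x → P x = 0 → x = 0)
    (hschwarz : ∀ x : A, star (P x) * P x ≤ P (star x * x)) :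
    ∃ S : NonUnitalStarSubalgebra ℂ A,
      (S : Set A) = Set.range ⇑P ∧ IsClosed (S : Set A) :=
  range_of_faithful_schwarz_projection_is_cstar_subalgebra_general P hproj hfaithful hschwarz
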